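/- arXiv:math/0610267 — 7 statements merged into one kernel-verified Lean document; each statement's English description precedes it below -/
import Mathlib

section
/- Let r ≥ 3 and let (m₁,…,m_r) be an r-tuple of natural numbers satisfying: (i) 2 ≤ m₁ ≤ … ≤ m_r, (ii) Θ((m₁,…,m_r)) > 0, (iii) 2/Θ((m₁,…,m_r)) is a positive integer, and (iv) m_r ≤ 2/Θ((m₁,…,m_r)). Then r ≤ 6; moreover, if r = 6 then m₁ = m₂ = … = m₆ = 2. -/
open scoped BigOperators

/-- The orbifold canonical degree `Θ` of an `r`-tuple of natural numbers. -/
def theta {r : ℕ} (m : Fin r → ℕ) : ℚ := -2 + ∑ i, (1 - 1 / (m i : ℚ))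

theorem stmt_0 {r : ℕ} (hr : 3 ≤ r) (m : Fin r → ℕ)
    (h2 : ∀ i, 2 ≤ m i) (hmono : Monotone m)
    (hpos : 0 < theta m)
    (hint : ∃ n : ℕ, 0 < n ∧ (2 : ℚ) / theta m = n)
    (hmax : (m ⟨r - 1, by omega⟩ : ℚ) ≤ 2 / theta m) :
    r ≤ 6 ∧ (r = 6 → ∀ i, m i = 2) := by
  have hterm : ∀ i, (1:ℚ)/2 ≤ 1 - 1/(m i : ℚ) := by
    intro i
    have h := h2 i
    have h2' : (2:ℚ) ≤ (m i : ℚ) := by exact_mod_cast h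
    have hinv : (1:ℚ)/(m i : ℚ) ≤ 1/2 :=
      one_div_le_one_div_of_le (by norm_num) h2'
    linarith
  have hsum : (r:ℚ)/2 ≤ ∑ i, (1 - 1/(m i : ℚ)) := by
    have := Finset.sum_le_sum (fun i _ => hterm i) (s := Finset.univ)
    simpa [Finset.sum_const, Finset.card_univ, mul_comm, div_eq_mul_inv] using this
  have htheta : -2 + (r:ℚ)/2 ≤ theta m := by
    unfold theta; linarith
  have hlast2 : (2:ℚ) ≤ (m ⟨r - 1, by omega⟩ : ℚ) := by
    exact_mod_cast h2 _
  have hr6 : r ≤ 6 := by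
    by_contra h
    push_neg at h
    have hr7 : (7:ℚ) ≤ (r:ℚ) := by exact_mod_cast h
    have ht : (3:ℚ)/2 ≤ theta m := by linarith
    have : 2 / theta m ≤ 2 / ((3:ℚ)/2) :=
      div_le_div_of_nonneg_left (by norm_num) (by norm_num) ht
    norm_num at this
    linarith
  refine ⟨hr6, fun h6 => ?_⟩
  subst h6
  have ht : (1:ℚ) ≤ theta m := by
    have : ((6:ℕ):ℚ) = 6 := by norm_num
    linarith [htheta, this ▸ htheta]
  have hdiv : 2 / theta m ≤ 2 := by
    have := div_le_div_of_nonneg_left (by norm_num : (0:ℚ) ≤ 2) (by norm_num : (0:ℚ) < 1) ht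
    simpa using this
  have hlast : m ⟨5, by omega⟩ = 2 := by
    have hle : (m ⟨5, by omega⟩ : ℚ) ≤ 2 := le_trans hmax hdiv
    have : m ⟨5, by omega⟩ ≤ 2 := by exact_mod_cast hle
    have := h2 ⟨5, by omega⟩
    omega
  intro i
  have hle : m i ≤ m ⟨5, by omega⟩ := hmono (Fin.le_def.mpr (by show (i:ℕ) ≤ 5; have := i.isLt; omega))
  have := h2 i
  omega
end

section
/- The set 𝒩₃ of triples (m₁,m₂,m₃) of natural numbers satisfying 2 ≤ m₁ ≤ m₂ ≤ m₃, Θ > 0, 2/Θ a positive integer and m₃ ≤ 2/Θ consists exactly of the 28 triples: (2,3,7), (2,3,8), (2,4,5), (2,3,9), (2,3,10), (2,3,12), (2,4,6), (3,3,4), (2,3,14), (2,3,15), (2,5,5), (2,3,18), (2,4,8), (2,5,6), (3,3,5), (2,4,12), (2,6,6), (3,3,6), (3,4,4), (2,5,10), (2,6,9), (3,3,9), (2,8,8), (3,4,6), (4,4,4), (3,6,6), (4,4,6), (5,5,5). -/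
/-- The orbifold canonical degree `Θ` of a tuple of natural numbers (given as a list). -/
def thetaL (l : List ℕ) : ℚ := -2 + (l.map fun m => 1 - 1 / (m : ℚ)).sum

/-- Membership in `𝒩_r`: the entries are at least `2` and weakly increasing, `Θ > 0`,
`2/Θ` is a positive integer, and every entry (equivalently, the largest entry `m_r`)
is at most `2/Θ`. -/
def NcondL (l : List ℕ) : Prop :=
  (∀ m ∈ l, 2 ≤ m) ∧ l.Pairwise (· ≤ ·) ∧ 0 < thetaL l ∧
    (∃ n : ℕ, 0 < n ∧ (2 : ℚ) / thetaL l = n) ∧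
    ∀ m ∈ l, (m : ℚ) ≤ 2 / thetaL l

/-!
Clearing denominators, `Θ(a,b,c) · abc = abc − (ab + ac + bc)`, so for a triple membership in `𝒩₃`
becomes a divisibility condition and an inequality between integers. The inequalities `m Θ ≤ 2` for
the entries bound the triple: `a Θ ≥ a − 3` gives `a ≤ 5`, `b Θ ≥ b/2 − 2` gives `b ≤ 8`, and
`c Θ = c (1 − 1/a − 1/b) − 1` with `1 − 1/a − 1/b` positive, hence at least `1/6`, gives `c ≤ 18`.
The finitely many remaining triples are checked by evaluation.
-/

lemma exists_pos_natCast_eq_div_iff_dvd {x y : ℤ} (hx : 0 < x) (hy : 0 < y) :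
    (∃ n : ℕ, 0 < n ∧ (x : ℚ) / y = n) ↔ y ∣ x := by
  have hy' : (y : ℚ) ≠ 0 := by exact_mod_cast hy.ne'
  constructor
  · rintro ⟨n, -, hn⟩
    rw [div_eq_iff hy'] at hn
    exact ⟨n, by exact_mod_cast hn.trans (mul_comm _ _)⟩
  · rintro ⟨k, rfl⟩
    have hk : 0 < k := pos_of_mul_pos_right hx hy.le
    lift k to ℕ using hk.le
    refine ⟨k, by exact_mod_cast hk, ?_⟩
    push_cast
    field_simp

lemma NcondL.mul_thetaL_le {l : List ℕ} (h : NcondL l) {m : ℕ} (hm : m ∈ l) :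
    m * thetaL l ≤ 2 :=
  (le_div_iff₀ h.2.2.1).1 (h.2.2.2.2 m hm)

lemma thetaL_triple (a b c : ℕ) :
    thetaL [a, b, c] = 1 - 1 / (a : ℚ) - 1 / (b : ℚ) - 1 / (c : ℚ) := by
  -- The ascription `(m : ℚ)` in `thetaL` coerces `l` to `List ℚ` through the list monad.
  simp only [thetaL, List.pure_def, List.bind_eq_flatMap, List.flatMap_cons, List.flatMap_nil,
    List.append_nil, List.cons_append, List.nil_append, List.map_cons, List.map_nil, List.sum_cons,
    List.sum_nil]
  ring

section Triple

variable {a b c : ℕ}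

lemma ncondL_triple_iff_sorted :
    NcondL [a, b, c] ↔ 2 ≤ a ∧ a ≤ b ∧ b ≤ c ∧ 0 < thetaL [a, b, c] ∧
      (∃ n : ℕ, 0 < n ∧ (2 : ℚ) / thetaL [a, b, c] = n) ∧ (c : ℚ) ≤ 2 / thetaL [a, b, c] := by
  simp only [NcondL, List.pairwise_cons, List.mem_cons, List.not_mem_nil, List.Pairwise.nil,
    forall_eq_or_imp, and_true, IsEmpty.forall_iff, forall_const]
  constructor
  · rintro ⟨⟨ha, -, -⟩, ⟨⟨hab, -⟩, hbc⟩, hθ, hn, -, -, hc⟩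
    exact ⟨ha, hab, hbc, hθ, hn, hc⟩
  · rintro ⟨ha, hab, hbc, hθ, hn, hc⟩
    have hab' : (a : ℚ) ≤ b := by exact_mod_cast hab
    have hbc' : (b : ℚ) ≤ c := by exact_mod_cast hbc
    exact ⟨⟨ha, by omega, by omega⟩, ⟨⟨hab, hab.trans hbc⟩, hbc⟩, hθ, hn,
      by linarith, by linarith, hc⟩

def thetaNum (a b c : ℕ) : ℤ := a * b * c - (a * b + a * c + b * c)

def NcondTriple (a b c : ℕ) : Prop :=
  2 ≤ a ∧ a ≤ b ∧ b ≤ c ∧ 0 < thetaNum a b c ∧ thetaNum a b c ∣ 2 * (a * b * c) ∧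
    c * thetaNum a b c ≤ 2 * (a * b * c)

instance (a b c : ℕ) : Decidable (NcondTriple a b c) := by
  unfold NcondTriple
  infer_instance

lemma thetaL_triple_eq_div (ha : a ≠ 0) (hb : b ≠ 0) (hc : c ≠ 0) :
    thetaL [a, b, c] = thetaNum a b c / (a * b * c) := by
  rw [thetaL_triple, thetaNum]
  push_cast
  field_simp
  ring

lemma ncondL_triple_iff : NcondL [a, b, c] ↔ NcondTriple a b c := by
  rw [ncondL_triple_iff_sorted, NcondTriple]
  refine and_congr_right fun ha => and_congr_right fun hab => and_congr_right fun hbc => ?_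
  have hP : (0 : ℤ) < a * b * c := by
    have : 0 < a * b * c := Nat.pos_of_ne_zero (by simp; omega)
    exact_mod_cast this
  have hPq : (0 : ℚ) < a * b * c := by exact_mod_cast hP
  have hθ := thetaL_triple_eq_div (a := a) (b := b) (c := c) (by omega) (by omega) (by omega)
  have h2θ : 2 / thetaL [a, b, c] = ((2 * (a * b * c) : ℤ) : ℚ) / thetaNum a b c := by
    rw [hθ]
    push_cast
    rw [div_div_eq_mul_div]
  rw [h2θ, hθ, div_pos_iff_of_pos_right hPq, Int.cast_pos]
  refine and_congr_right fun hD => ?_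
  rw [exists_pos_natCast_eq_div_iff_dvd (by omega) hD, le_div_iff₀ (by exact_mod_cast hD)]
  exact and_congr_right fun _ => by exact_mod_cast Iff.rfl

lemma one_sixth_le_one_sub_inv_sub_inv (ha : 2 ≤ a) (hab : a ≤ b)
    (h : 0 < 1 - 1 / (a : ℚ) - 1 / b) : 1 / 6 ≤ 1 - 1 / (a : ℚ) - 1 / b := by
  rcases (show a = 2 ∨ 3 ≤ a by omega) with rfl | ha3
  · have hb3 : 3 ≤ b := by
      by_contra! hb
      obtain rfl : b = 2 := by omega
      norm_num at h
    have : 1 / (b : ℚ) ≤ 1 / 3 := one_div_le_one_div_of_le (by norm_num) (by exact_mod_cast hb3)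
    rw [Nat.cast_ofNat]
    linarith
  · have h3a : 1 / (a : ℚ) ≤ 1 / 3 := one_div_le_one_div_of_le (by norm_num) (by exact_mod_cast ha3)
    have h3b : 1 / (b : ℚ) ≤ 1 / 3 :=
      one_div_le_one_div_of_le (by norm_num) (by exact_mod_cast ha3.trans hab)
    linarith

lemma NcondL.triple_sorted (h : NcondL [a, b, c]) : 2 ≤ a ∧ a ≤ b ∧ b ≤ c := by
  obtain ⟨ha, hab, hbc, -⟩ := ncondL_triple_iff_sorted.1 h
  exact ⟨ha, hab, hbc⟩

lemma NcondL.triple_fst_le (h : NcondL [a, b, c]) : a ≤ 5 := by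
  obtain ⟨ha, hab, hbc⟩ := h.triple_sorted
  have hA : (0 : ℚ) < a := by exact_mod_cast (by omega : 0 < a)
  have hab' : (a : ℚ) / b ≤ 1 := div_le_one_of_le₀ (by exact_mod_cast hab) (by positivity)
  have hac' : (a : ℚ) / c ≤ 1 := div_le_one_of_le₀ (by exact_mod_cast hab.trans hbc) (by positivity)
  have hθ : (a : ℚ) * thetaL [a, b, c] = a - 1 - a / b - a / c := by
    rw [thetaL_triple]
    field_simp
  have := h.mul_thetaL_le (m := a) (by simp)
  exact_mod_cast (by linarith : (a : ℚ) ≤ 5)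

lemma NcondL.triple_snd_le (h : NcondL [a, b, c]) : b ≤ 8 := by
  obtain ⟨ha, hab, hbc⟩ := h.triple_sorted
  have hA : (2 : ℚ) ≤ a := by exact_mod_cast ha
  have hba' : (b : ℚ) / a ≤ b / 2 := div_le_div_of_nonneg_left (by positivity) (by norm_num) hA
  have hbc' : (b : ℚ) / c ≤ 1 := div_le_one_of_le₀ (by exact_mod_cast hbc) (by positivity)
  have hθ : (b : ℚ) * thetaL [a, b, c] = b - b / a - 1 - b / c := by
    rw [thetaL_triple]
    have hB : (b : ℚ) ≠ 0 := by exact_mod_cast (by omega : b ≠ 0)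
    field_simp
  have := h.mul_thetaL_le (m := b) (by simp)
  exact_mod_cast (by linarith : (b : ℚ) ≤ 8)

lemma NcondL.triple_thd_le (h : NcondL [a, b, c]) : c ≤ 18 := by
  obtain ⟨ha, hab, hbc⟩ := h.triple_sorted
  have hC : (0 : ℚ) < c := by exact_mod_cast (by omega : 0 < c)
  have hpos : 0 < 1 - 1 / (a : ℚ) - 1 / b := by
    have := h.2.2.1
    rw [thetaL_triple] at this
    have : 0 < 1 / (c : ℚ) := by positivity
    linarith
  have hsixth := one_sixth_le_one_sub_inv_sub_inv ha hab hpos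
  have hcθ : (c : ℚ) * thetaL [a, b, c] = c * (1 - 1 / a - 1 / b) - 1 := by
    rw [thetaL_triple]
    field_simp
  have := h.mul_thetaL_le (m := c) (by simp)
  have := mul_le_mul_of_nonneg_left hsixth hC.le
  exact_mod_cast (by linarith : (c : ℚ) ≤ 18)

end Triple

-- Deciding membership in the 28-element set literal needs a large instance term.
set_option synthInstance.maxSize 2000 in
theorem stmt_1 (m₁ m₂ m₃ : ℕ) :
    NcondL [m₁, m₂, m₃] ↔
      (m₁, m₂, m₃) ∈ ({(2,3,7), (2,3,8), (2,4,5), (2,3,9), (2,3,10), (2,3,12),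
        (2,4,6), (3,3,4), (2,3,14), (2,3,15), (2,5,5), (2,3,18), (2,4,8),
        (2,5,6), (3,3,5), (2,4,12), (2,6,6), (3,3,6), (3,4,4), (2,5,10),
        (2,6,9), (3,3,9), (2,8,8), (3,4,6), (4,4,4), (3,6,6), (4,4,6),
        (5,5,5)} : Set (ℕ × ℕ × ℕ)) := by
  by_cases hbound : m₁ < 6 ∧ m₂ < 9 ∧ m₃ < 19
  · obtain ⟨h₁, h₂, h₃⟩ := hbound
    rw [ncondL_triple_iff]
    -- Reverting one variable at a time keeps each bound next to its variable, so the goal becomes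
    -- a bounded quantifier that `decide` can evaluate.
    revert m₃
    revert m₂
    revert m₁
    decide
  · refine iff_of_false (fun h => hbound ?_) fun h => hbound ?_
    · have := h.triple_fst_le
      have := h.triple_snd_le
      have := h.triple_thd_le
      omega
    · simp only [Set.mem_insert_iff, Set.mem_singleton_iff, Prod.ext_iff] at h
      omega
end

section
/- The set 𝒩₄ of quadruples (m₁,m₂,m₃,m₄) of natural numbers satisfying 2 ≤ m₁ ≤ m₂ ≤ m₃ ≤ m₄, Θ > 0, 2/Θ a positive integer and m₄ ≤ 2/Θ consists exactly of the 7 quadruples: (2,2,2,3), (2,2,2,4), (2,2,2,6), (2,2,3,3), (2,2,4,4), (2,3,3,3), (3,3,3,3). -/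
/-!
Every term `1 - 1/mᵢ` of `Θ` is at least `1/2`, so for any entry `m` of an `r`-tuple,
`Θ ≥ (r - 3)/2 - 1/m`. Multiplying by `m` and using `m Θ ≤ 2` gives `(r - 3) m ≤ 6`; for `r = 4`
all entries lie in `[2, 6]`, and the finitely many remaining quadruples are checked one by one.
-/

theorem thetaL_eq (l : List ℕ) :
    thetaL l = -2 + l.length / 2 + (l.map fun m : ℕ => 1 / 2 - 1 / (m : ℚ)).sum := by
  have split (m : ℕ) : 1 - 1 / (m : ℚ) = 1 / 2 + (1 / 2 - 1 / m) := by ring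
  simp only [thetaL, List.pure_def, List.bind_eq_flatMap, ← List.map_eq_flatMap, List.map_map,
    Function.comp_def, split, List.sum_map_add, List.map_const', List.sum_replicate, nsmul_eq_mul]
  ring

theorem le_thetaL_of_mem {l : List ℕ} (hl : ∀ m ∈ l, 2 ≤ m) {m : ℕ} (hm : m ∈ l) :
    ((l.length : ℚ) - 3) / 2 - 1 / m ≤ thetaL l := by
  have half_sub_nonneg (k : ℕ) (hk : k ∈ l) : 0 ≤ 1 / 2 - 1 / (k : ℚ) :=
    sub_nonneg.2 (one_div_le_one_div_of_le two_pos (by exact_mod_cast hl k hk))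
  have := List.single_le_sum (List.forall_mem_map.2 half_sub_nonneg) _
    (List.mem_map_of_mem (f := fun m : ℕ => 1 / 2 - 1 / (m : ℚ)) hm)
  rw [thetaL_eq]
  linarith

theorem NcondL.length_sub_three_mul_le {l : List ℕ} (h : NcondL l) {m : ℕ} (hm : m ∈ l) :
    ((l.length : ℚ) - 3) * m ≤ 6 := by
  obtain ⟨hl, -, hpos, -, hle⟩ := h
  have hm0 : (0 : ℚ) < m := by exact_mod_cast two_pos.trans_le (hl m hm)
  have hmθ : m * thetaL l ≤ 2 := (le_div_iff₀ hpos).1 (hle m hm)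
  have := mul_le_mul_of_nonneg_left (le_thetaL_of_mem hl hm) hm0.le
  rw [mul_sub, mul_one_div_cancel hm0.ne'] at this
  linarith

theorem NcondL.le_six {l : List ℕ} (h : NcondL l) (hl : l.length = 4) {m : ℕ} (hm : m ∈ l) :
    m ≤ 6 := by
  have := h.length_sub_three_mul_le hm
  rw [hl] at this
  norm_num at this
  exact_mod_cast this

theorem exists_nat_pos_eq_iff_den_eq_one {q : ℚ} (hq : 0 < q) :
    (∃ n : ℕ, 0 < n ∧ q = n) ↔ q.den = 1 := by
  constructor
  · rintro ⟨n, -, rfl⟩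
    rfl
  · intro h
    have hnum : 0 < q.num := Rat.num_pos.2 hq
    refine ⟨q.num.toNat, by omega, ?_⟩
    rw [← (Rat.den_eq_one_iff q).1 h]
    exact_mod_cast (Int.toNat_of_nonneg hnum.le).symm

theorem ncondL_iff_den_eq_one (l : List ℕ) :
    NcondL l ↔ (∀ m ∈ l, 2 ≤ m) ∧ l.Pairwise (· ≤ ·) ∧ 0 < thetaL l ∧
      (2 / thetaL l).den = 1 ∧ ∀ m ∈ l, (m : ℚ) ≤ 2 / thetaL l := by
  unfold NcondL
  refine and_congr_right' <| and_congr_right' <| and_congr_right fun hpos => ?_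
  rw [exists_nat_pos_eq_iff_den_eq_one (div_pos two_pos hpos)]

instance NcondL.decidablePred : DecidablePred NcondL :=
  fun l => decidable_of_iff _ (ncondL_iff_den_eq_one l).symm

-- The elaborator's `decide` gets stuck on `ℚ` arithmetic; the kernel evaluates it.
theorem mem_of_ncondL_of_mem_Icc :
    ∀ a ∈ Finset.Icc 2 6, ∀ b ∈ Finset.Icc 2 6, ∀ c ∈ Finset.Icc 2 6, ∀ d ∈ Finset.Icc 2 6,
      NcondL [a, b, c, d] →
        (a, b, c, d) ∈ ({(2,2,2,3), (2,2,2,4), (2,2,2,6), (2,2,3,3),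
          (2,2,4,4), (2,3,3,3), (3,3,3,3)} : Set (ℕ × ℕ × ℕ × ℕ)) := by
  decide +kernel

theorem stmt_2 (m₁ m₂ m₃ m₄ : ℕ) :
    NcondL [m₁, m₂, m₃, m₄] ↔
      (m₁, m₂, m₃, m₄) ∈ ({(2,2,2,3), (2,2,2,4), (2,2,2,6), (2,2,3,3),
        (2,2,4,4), (2,3,3,3), (3,3,3,3)} : Set (ℕ × ℕ × ℕ × ℕ)) := by
  constructor
  · intro h
    have hIcc (m : ℕ) (hm : m ∈ [m₁, m₂, m₃, m₄]) : m ∈ Finset.Icc 2 6 :=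
      Finset.mem_Icc.2 ⟨h.1 m hm, h.le_six rfl hm⟩
    exact mem_of_ncondL_of_mem_Icc _ (hIcc m₁ (by simp)) _ (hIcc m₂ (by simp))
      _ (hIcc m₃ (by simp)) _ (hIcc m₄ (by simp)) h
  · rintro (h | h | h | h | h | h | h) <;> cases h <;> decide +kernel
end

section
/- The set 𝒩₅ of 5-tuples (m₁,…,m₅) of natural numbers satisfying 2 ≤ m₁ ≤ … ≤ m₅, Θ > 0, 2/Θ a positive integer and m₅ ≤ 2/Θ consists exactly of the two tuples (2,2,2,2,2) and (2,2,2,2,3), and the corresponding set 𝒩₆ of 6-tuples consists exactly of the single tuple (2,2,2,2,2,2). -/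
/-!
`Θ` is monotone in each entry, and `m ≤ 2/Θ` means `m Θ ≤ 2`. For six entries `Θ ≥ Θ(2,…,2) = 1`,
so every entry is at most `2`. For five entries, `m₄ ≥ 3` would give `Θ ≥ Θ(2,2,2,3,3) = 5/6` and
`m₅ Θ ≥ 5/2`; hence `Θ = 1 - 1/m₅` and `m₅ Θ = m₅ - 1 ≤ 2`.
-/

theorem thetaL_cons (m : ℕ) (l : List ℕ) : thetaL (m :: l) = thetaL l + (1 - 1 / m) := by
  simp [thetaL]
  ring

theorem thetaL_le_thetaL {l l' : List ℕ} (h : List.Forall₂ (fun a b => 0 < a ∧ a ≤ b) l l') :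
    thetaL l ≤ thetaL l' := by
  induction h with
  | nil => rfl
  | @cons a b l l' hab _ ih =>
    have : (1 : ℚ) / b ≤ 1 / a :=
      one_div_le_one_div_of_le (by exact_mod_cast hab.1) (by exact_mod_cast hab.2)
    rw [thetaL_cons, thetaL_cons]
    linarith

theorem NcondL.mul_thetaL_le_two {l : List ℕ} (h : NcondL l) {m : ℕ} (hm : m ∈ l) :
    (m : ℚ) * thetaL l ≤ 2 := by
  obtain ⟨-, -, hθ, -, hle⟩ := h
  exact (le_div_iff₀ hθ).1 (hle m hm)

theorem ncondL_five_iff (m₁ m₂ m₃ m₄ m₅ : ℕ) :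
    NcondL [m₁, m₂, m₃, m₄, m₅] ↔
      (m₁, m₂, m₃, m₄, m₅) = (2,2,2,2,2) ∨ (m₁, m₂, m₃, m₄, m₅) = (2,2,2,2,3) := by
  constructor
  · intro h
    have h₁ : 2 ≤ m₁ := h.1 m₁ (by simp)
    have hsorted := h.2.1
    simp only [List.pairwise_cons, List.mem_cons, List.not_mem_nil, List.Pairwise.nil,
      forall_eq_or_imp] at hsorted
    obtain ⟨⟨h₁₂, -⟩, ⟨h₂₃, -⟩, ⟨h₃₄, -⟩, ⟨h₄₅, -⟩, -⟩ := hsorted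
    have hm₅ := h.mul_thetaL_le_two (m := m₅) (by simp)
    have h₄ : m₄ = 2 := by
      by_contra h₄
      have hθ : 5 / 6 ≤ thetaL [m₁, m₂, m₃, m₄, m₅] := calc
        (5 / 6 : ℚ) = thetaL [2, 2, 2, 3, 3] := by norm_num [thetaL]
        _ ≤ _ := thetaL_le_thetaL (by simp [List.forall₂_cons]; omega)
      have : (3 : ℚ) ≤ m₅ := by exact_mod_cast (show 3 ≤ m₅ by omega)
      nlinarith
    obtain ⟨rfl, rfl, rfl, rfl⟩ : m₁ = 2 ∧ m₂ = 2 ∧ m₃ = 2 ∧ m₄ = 2 := by omega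
    have hθ : thetaL [2, 2, 2, 2, m₅] = 1 - 1 / m₅ := by
      norm_num [thetaL]
      ring
    have h₅ : (m₅ : ℚ) * (1 - 1 / m₅) = m₅ - 1 := by
      field_simp
    rw [hθ, h₅] at hm₅
    have : m₅ ≤ 3 := by exact_mod_cast (show (m₅ : ℚ) ≤ 3 by linarith)
    interval_cases m₅ <;> simp
  · rintro (h | h) <;> simp only [Prod.mk.injEq] at h <;> obtain ⟨rfl, rfl, rfl, rfl, rfl⟩ := h
    · norm_num [NcondL, thetaL]
      exact ⟨4, by norm_num, by norm_num⟩
    · norm_num [NcondL, thetaL]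
      exact ⟨3, by norm_num, by norm_num⟩

theorem ncondL_six_iff (m₁ m₂ m₃ m₄ m₅ m₆ : ℕ) :
    NcondL [m₁, m₂, m₃, m₄, m₅, m₆] ↔ (m₁, m₂, m₃, m₄, m₅, m₆) = (2,2,2,2,2,2) := by
  constructor
  · intro h
    have hθ : 1 ≤ thetaL [m₁, m₂, m₃, m₄, m₅, m₆] := calc
      (1 : ℚ) = thetaL [2, 2, 2, 2, 2, 2] := by norm_num [thetaL]
      _ ≤ _ := thetaL_le_thetaL (by simpa [List.forall₂_cons] using h.1)
    have hall : ∀ m ∈ [m₁, m₂, m₃, m₄, m₅, m₆], m = 2 := fun m hm => by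
      have hmθ := h.mul_thetaL_le_two hm
      have : m ≤ 2 := by
        exact_mod_cast (show (m : ℚ) ≤ 2 by nlinarith [m.cast_nonneg (α := ℚ)])
      have := h.1 m hm
      omega
    simp_all
  · intro h
    simp only [Prod.mk.injEq] at h
    obtain ⟨rfl, rfl, rfl, rfl, rfl, rfl⟩ := h
    norm_num [NcondL, thetaL]
    exact ⟨2, by norm_num, by norm_num⟩

theorem stmt_3 :
    (∀ m₁ m₂ m₃ m₄ m₅ : ℕ, NcondL [m₁, m₂, m₃, m₄, m₅] ↔
      ((m₁, m₂, m₃, m₄, m₅) = (2,2,2,2,2) ∨ (m₁, m₂, m₃, m₄, m₅) = (2,2,2,2,3))) ∧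
    (∀ m₁ m₂ m₃ m₄ m₅ m₆ : ℕ, NcondL [m₁, m₂, m₃, m₄, m₅, m₆] ↔
      (m₁, m₂, m₃, m₄, m₅, m₆) = (2,2,2,2,2,2)) :=
  ⟨ncondL_five_iff, ncondL_six_iff⟩
end

section
/- Let r ≥ 3 and let A = (m₁,…,m_r) be an r-tuple of natural numbers satisfying: (i) 2 ≤ m₁ ≤ … ≤ m_r, (ii) Θ(A) > 0, (iii) m_r ≤ 4/Θ(A), (iv) β(A) := 4/Θ(A) is a positive integer, and (v) β(A) is even and β(A)²/2 is divisible by each mᵢ. Then r ≤ 8 and r ≠ 7. -/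
open scoped BigOperators

theorem stmt_4 {r : ℕ} (hr : 3 ≤ r) (m : Fin r → ℕ)
    (h2 : ∀ i, 2 ≤ m i) (hmono : Monotone m)
    (hpos : 0 < theta m)
    (hmax : (m ⟨r - 1, by omega⟩ : ℚ) ≤ 4 / theta m)
    (hbeta : ∃ n : ℕ, 0 < n ∧ (4 : ℚ) / theta m = n ∧ 2 ∣ n ∧ ∀ i, m i ∣ n ^ 2 / 2) :
    r ≤ 8 ∧ r ≠ 7 := by
  have hsum : (r : ℚ) * (1/2) ≤ ∑ i, (1 - 1 / (m i : ℚ)) := by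
    calc (r:ℚ) * (1/2) = ∑ _i : Fin r, (1/2 : ℚ) := by
          simp [Finset.sum_const, mul_comm]
      _ ≤ ∑ i, (1 - 1 / (m i : ℚ)) := by
          apply Finset.sum_le_sum
          intro i _
          have h2i : (2:ℚ) ≤ (m i : ℚ) := by exact_mod_cast h2 i
          have : 1 / (m i : ℚ) ≤ 1/2 := by
            apply one_div_le_one_div_of_le <;> linarith
          linarith
  have hml : (2:ℚ) ≤ (m ⟨r-1, by omega⟩ : ℚ) := by exact_mod_cast h2 _
  have hθle : theta m ≤ 2 := by
    have h4 : 2 * theta m ≤ 4 := by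
      have := (le_div_iff₀ hpos).mp (le_trans hml hmax)
      linarith
    linarith
  have hr8 : r ≤ 8 := by
    have h1 : (r:ℚ)*(1/2) - 2 ≤ 2 := by unfold theta at hθle; linarith
    have h2 : (r:ℚ) ≤ 8 := by linarith
    exact_mod_cast h2
  refine ⟨hr8, ?_⟩
  intro h7
  subst h7
  obtain ⟨n, hn0, hnθ, hn2, hdvd⟩ := hbeta
  have hθge : (3/2 : ℚ) ≤ theta m := by
    unfold theta at hsum ⊢
    push_cast at hsum
    linarith
  have hnle : (n:ℚ) ≤ 8/3 := by
    rw [← hnθ, div_le_div_iff₀ hpos (by norm_num)]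
    linarith
  have hnge : (2:ℚ) ≤ (n:ℚ) := by
    rw [← hnθ]; exact le_trans hml hmax
  have hn : n = 2 := by
    have h1 : n < 3 := by exact_mod_cast lt_of_le_of_lt hnle (by norm_num : (8/3:ℚ) < 3)
    have h2' : 2 ≤ n := by exact_mod_cast hnge
    omega
  have hm2 : ∀ i, m i = 2 := by
    intro i
    have hd := hdvd i
    rw [hn] at hd
    norm_num at hd
    have := Nat.le_of_dvd (by norm_num) hd
    have := h2 i
    omega
  have hθ : theta m = 3/2 := by
    unfold theta
    have : ∑ i : Fin 7, (1 - 1/(m i:ℚ)) = ∑ _i : Fin 7, (1/2:ℚ) :=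
      Finset.sum_congr rfl fun i _ => by rw [hm2 i]; norm_num
    rw [this]
    norm_num
  rw [hθ, hn] at hnθ
  norm_num at hnθ
end

section
/- No group of order 1152 has abelianization isomorphic to the cyclic group of order 3, and no group of order 800 has abelianization isomorphic to the cyclic group of order 5. -/
/-!
Let `|G| = 2^a p²` with `p ∈ {3, 5}` and suppose `G/G'` has order `p`. Groups of order `2^x p` are
solvable: in a simple one the normalizer of a Sylow 2-subgroup has index `p`, so the group embeds
in `S_p`, and then its order leaves no room for more than one Sylow `p`-subgroup. Hence `G'`, and
with it `G`, is solvable. As `G'` has prime index, every proper normal subgroup `N` of `G` lies in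
`G'`, for otherwise `G = G'N` and the nontrivial solvable group `G/N` would be perfect.

Induct on `a`. A nontrivial normal 2-subgroup `T` lies in `G'`, so `G/T` is a smaller
counterexample. Otherwise, the last nontrivial intersection of `G'` with a term of the derived
series is an abelian normal subgroup `A`; its Sylow 2-subgroup is characteristic, hence normal in
`G` and trivial, so `|A| = p`. The centralizer of `A` is normal and contains an abelian Sylow
`p`-subgroup of order `p²`, which is too big for `G'` (of order `2^a p`), so `A` is central.
Burnside's transfer theorem then gives `G'` a normal complement to `A`, which is characteristic
in `G'`: a normal 2-subgroup of `G` of order `2^a`, a contradiction.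
-/

open Subgroup
open scoped Nat

universe u

section Index

variable {G : Type*} [Group G] {H : Subgroup G} {n m : ℕ}

theorem Subgroup.card_eq_of_index_eq (hG : Nat.card G = n * m) (hH : H.index = m) (hm : 0 < m) :
    Nat.card H = n :=
  Nat.eq_of_mul_eq_mul_right hm (by rw [← hG, ← hH, card_mul_index])

theorem Subgroup.index_eq_of_card_eq (hG : Nat.card G = n * m) (hH : Nat.card H = n) (hn : 0 < n) :
    H.index = m :=
  Nat.eq_of_mul_eq_mul_left hn (by rw [← hG, ← hH, card_mul_index])

end Index

section Commutator

variable {G : Type*} [Group G]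

theorem map_commutator_of_surjective {H : Type*} [Group H] {f : G →* H}
    (hf : Function.Surjective f) : (commutator G).map f = commutator H := by
  rw [map_commutator_eq, f.range_eq_top.mpr hf, commutator_def]

theorem index_commutator_quotient {N : Subgroup G} [N.Normal] (hN : N ≤ commutator G) :
    (commutator (G ⧸ N)).index = (commutator G).index := by
  rw [← map_commutator_of_surjective (QuotientGroup.mk'_surjective N)]
  exact (commutator G).index_map_eq (QuotientGroup.mk'_surjective N)
    (by rwa [QuotientGroup.ker_mk'])

theorem Group.IsSolvable.eq_top_of_commutator_sup_eq_top [Group.IsSolvable G] {N : Subgroup G}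
    [N.Normal] (h : commutator G ⊔ N = ⊤) : N = ⊤ := by
  have hperfect : commutator (G ⧸ N) = ⊤ := by
    rw [← map_commutator_of_surjective (QuotientGroup.mk'_surjective N),
      ← sup_bot_eq ((commutator G).map _), ← QuotientGroup.map_mk'_self N, ← Subgroup.map_sup, h,
      map_top_of_surjective _ (QuotientGroup.mk'_surjective N)]
  have : Subsingleton (G ⧸ N) := not_nontrivial_iff_subsingleton.mp fun _ =>
    (IsSolvable.commutator_lt_top_of_nontrivial (G ⧸ N)).ne hperfect
  rw [← index_eq_one, index_eq_card, Nat.card_unique]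

theorem Group.IsSolvable.le_commutator [Group.IsSolvable G] (hK : (commutator G).index.Prime)
    {N : Subgroup G} [N.Normal] (hN : N ≠ ⊤) : N ≤ commutator G := by
  have : (commutator G).FiniteIndex := ⟨hK.ne_zero⟩
  rcases hK.eq_one_or_self_of_dvd _ (index_dvd_of_le (le_sup_left (b := N))) with h | h
  · exact absurd (eq_top_of_commutator_sup_eq_top (index_eq_one.mp h)) hN
  · have heq : commutator G ⊔ N = commutator G :=
      (eq_of_le_of_not_lt le_sup_left fun hlt => (index_strictAnti hlt).ne h).symm
    exact le_sup_right.trans heq.le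

theorem Group.IsSolvable.le_center [Group.IsSolvable G] (hK : (commutator G).index.Prime)
    {A Q : Subgroup G} [A.Normal] [IsMulCommutative Q] (hAQ : A ≤ Q)
    (hQ : ¬ Q ≤ commutator G) : A ≤ center G := by
  have hQC : Q ≤ centralizer (A : Set G) := fun q hq a ha =>
    setLike_mul_comm (hAQ ha) hq
  by_contra hA
  exact hQ (hQC.trans (le_commutator hK fun h => hA (centralizer_eq_top_iff_subset.mp h)))

theorem Group.IsSolvable.exists_normal_isMulCommutative_le [Group.IsSolvable G] {N : Subgroup G}
    [N.Normal] (hN : N ≠ ⊥) : ∃ A ≤ N, A.Normal ∧ A ≠ ⊥ ∧ IsMulCommutative A := by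
  classical
  obtain ⟨n, hn⟩ := ‹Group.IsSolvable G›
  have hex : ∃ k, N ⊓ derivedSeries G k = ⊥ := ⟨n, by rw [hn, inf_bot_eq]⟩
  set k := Nat.find hex
  have hspec : N ⊓ derivedSeries G k = ⊥ := Nat.find_spec hex
  have hk : k ≠ 0 := fun h => hN <| by simpa [h] using hspec
  refine ⟨N ⊓ derivedSeries G (k - 1), inf_le_left, inferInstance, Nat.find_min hex (by omega), ?_⟩
  rw [← commutator_self_eq_bot_iff, eq_bot_iff, ← hspec]
  refine le_inf ((commutator_le_self _).trans inf_le_left) ?_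
  rw [← Nat.sub_add_cancel (Nat.one_le_iff_ne_zero.mpr hk), derivedSeries_succ]
  exact commutator_mono inf_le_right inf_le_right

end Commutator

section Sylow

variable {G : Type*} [Group G] {p : ℕ}

theorem Sylow.card_eq_of_card_eq_pow_mul [Finite G] [hp : Fact p.Prime] (P : Sylow p G) {n m : ℕ}
    (hG : Nat.card G = p ^ n * m) (hm : ¬ p ∣ m) : Nat.card P = p ^ n := by
  obtain ⟨k, hk⟩ := IsPGroup.iff_card.mp P.isPGroup'
  refine Nat.dvd_antisymm ?_ (P.pow_dvd_card_of_pow_dvd_card (hG ▸ Dvd.intro m rfl))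
  have hcop : (Nat.card P).Coprime m :=
    hk ▸ Nat.Coprime.pow_left k ((Nat.Prime.coprime_iff_not_dvd hp.out).mpr hm)
  exact hcop.dvd_of_dvd_mul_right (hG ▸ card_subgroup_dvd_card (P : Subgroup G))

theorem Sylow.index_eq_of_card_eq_pow_mul [Finite G] [hp : Fact p.Prime] (P : Sylow p G) {n m : ℕ}
    (hG : Nat.card G = p ^ n * m) (hm : ¬ p ∣ m) : P.index = m :=
  index_eq_of_card_eq hG (P.card_eq_of_card_eq_pow_mul hG hm) (pow_pos hp.out.pos n)

theorem Sylow.normal_map_subtype {N : Subgroup G} [N.Normal] [Finite N] {q : ℕ} [Fact q.Prime]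
    (P : Sylow q N) (hP : (P : Subgroup N).Normal) : ((P : Subgroup N).map N.subtype).Normal :=
  have := P.characteristic_of_normal hP
  inferInstance

theorem Sylow.exists_normal_isComplement'_of_le_center [Finite G] [Fact p.Prime]
    (P : Sylow p G) (hP : (P : Subgroup G) ≤ center G) :
    ∃ N : Subgroup G, N.Normal ∧ N.IsComplement' P := by
  have hPc : normalizer (P : Subgroup G) ≤ centralizer (P : Set G) := by
    have hc : centralizer (P : Set G) = ⊤ := centralizer_eq_top_iff_subset.mpr hP
    rw [hc]
    exact le_top
  exact ⟨_, (MonoidHom.transferSylow P hPc).normal_ker,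
    MonoidHom.ker_transferSylow_isComplement' P hPc⟩

theorem IsPGroup.isSolvable [Finite G] [Fact p.Prime] (hG : IsPGroup p G) : Group.IsSolvable G :=
  have := hG.isNilpotent
  inferInstance

theorem IsSimpleGroup.card_sylow_ne_one [IsSimpleGroup G] (P : Sylow p G)
    (hbot : (P : Subgroup G) ≠ ⊥) (htop : (P : Subgroup G) ≠ ⊤) : Nat.card (Sylow p G) ≠ 1 := by
  intro h
  have : Subsingleton (Sylow p G) := (Nat.card_eq_one_iff_unique.mp h).1
  exact (P.normal_of_subsingleton.eq_bot_or_eq_top).elim hbot htop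

theorem IsSimpleGroup.card_dvd_factorial_index [Finite G] [IsSimpleGroup G] {H : Subgroup G}
    (hH : H ≠ ⊤) : Nat.card G ∣ H.index ! := by
  have hcore : H.normalCore = ⊥ := H.normalCore_normal.eq_bot_or_eq_top.resolve_right
    fun h => hH (top_le_iff.mp (h ▸ H.normalCore_le))
  rw [← index_bot, ← hcore, normalCore_eq_ker, index_ker, index_eq_card, ← Nat.card_perm]
  exact card_subgroup_dvd_card _

end Sylow

theorem isSolvable_of_isSimpleGroup_of_card_dvd {n : ℕ} (hn : n ≠ 0)
    (h : ∀ (H : Type u) [Group H] [IsSimpleGroup H], Nat.card H ∣ n → Group.IsSolvable H)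
    (G : Type u) [Group G] (hG : Nat.card G ∣ n) : Group.IsSolvable G := by
  induction hc : Nat.card G using Nat.strong_induction_on generalizing G with
  | _ c ih =>
  have : Finite G := Nat.finite_of_card_ne_zero (ne_zero_of_dvd_ne_zero hn hG)
  rcases subsingleton_or_nontrivial G with _ | _
  · infer_instance
  by_cases hsimple : ∀ N : Subgroup G, N.Normal → N = ⊥ ∨ N = ⊤
  · have : IsSimpleGroup G := ⟨hsimple⟩
    exact h G hG
  push Not at hsimple
  obtain ⟨N, hN, hbot, htop⟩ := hsimple
  have hmul : Nat.card N * N.index = c := hc ▸ card_mul_index N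
  have hN1 : 1 < Nat.card N := N.one_lt_card_iff_ne_bot.mpr hbot
  have hi1 : 1 < N.index := one_lt_index_of_ne_top htop
  rw [Group.isSolvable_iff_subgroup_quotient N]
  constructor
  · have hlt : Nat.card N < c := hmul ▸ lt_mul_of_one_lt_right (by omega) hi1
    exact ih _ hlt N ((card_subgroup_dvd_card N).trans hG) rfl
  · have hlt : Nat.card (G ⧸ N) < c := by
      rw [← index_eq_card, ← hmul]
      exact lt_mul_of_one_lt_left (by omega) hN1
    exact ih _ hlt (G ⧸ N) ((card_quotient_dvd_card N).trans hG) rfl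

section SmallOrder

variable {p : ℕ}

theorem eq_one_of_dvd_two_pow_of_modEq_one {x n : ℕ} (hp : p = 3 ∨ p = 5)
    (hx : 2 ^ x * p ∣ p !) (hn : n ∣ 2 ^ x) (hmod : n ≡ 1 [MOD p]) : n = 1 := by
  obtain ⟨y, hy, rfl⟩ := (Nat.dvd_prime_pow Nat.prime_two).1 hn
  have h2y : 2 ^ y * p ∣ p ! := (mul_dvd_mul_right (pow_dvd_pow 2 hy) p).trans hx
  have hy5 : y < 5 := by
    by_contra! h
    have h32 := Nat.pow_le_pow_right two_pos h
    have := Nat.le_of_dvd (Nat.factorial_pos p) h2y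
    rcases hp with rfl | rfl <;> simp [Nat.factorial] at this <;> omega
  rcases hp with rfl | rfl <;> interval_cases y <;> simp_all [Nat.ModEq, Nat.factorial]

theorem not_isSimpleGroup_of_card_eq_two_pow_mul (hp : p = 3 ∨ p = 5) {G : Type*} [Group G]
    {x : ℕ} (hx : x ≠ 0) (hG : Nat.card G = 2 ^ x * p) : ¬ IsSimpleGroup G := by
  intro _
  obtain ⟨hpp, hp2⟩ : p.Prime ∧ ¬ 2 ∣ p := by rcases hp with rfl | rfl <;> norm_num
  have : Fact p.Prime := ⟨hpp⟩
  have h2x := Nat.one_lt_two_pow hx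
  have : Finite G := Nat.finite_of_card_ne_zero (hG ▸ Nat.mul_ne_zero (by positivity) hpp.ne_zero)
  obtain ⟨P⟩ : Nonempty (Sylow 2 G) := inferInstance
  have hPcard := P.card_eq_of_card_eq_pow_mul hG hp2
  have hPindex := P.index_eq_of_card_eq_pow_mul hG hp2
  have hPtop : (P : Subgroup G) ≠ ⊤ := fun h => hpp.ne_one (by rw [← hPindex, h, index_top])
  have hn2 : Nat.card (Sylow 2 G) = p :=
    ((hpp.eq_one_or_self_of_dvd _ (hPindex ▸ P.card_dvd_index)).resolve_left
      (IsSimpleGroup.card_sylow_ne_one P (fun h => by rw [h, card_bot] at hPcard; omega) hPtop))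
  have hfact : 2 ^ x * p ∣ p ! := by
    have hnorm := P.card_eq_index_normalizer
    rw [hn2] at hnorm
    refine hG ▸ hnorm ▸ IsSimpleGroup.card_dvd_factorial_index fun h => hpp.ne_one ?_
    rw [hnorm, h, index_top]
  obtain ⟨R⟩ : Nonempty (Sylow p G) := inferInstance
  have hG' : Nat.card G = p ^ 1 * 2 ^ x := by rw [hG, pow_one, mul_comm]
  have hp2x : ¬ p ∣ 2 ^ x := fun h => by
    rw [Nat.prime_eq_prime_of_dvd_pow hpp Nat.prime_two h] at hp2
    exact hp2 dvd_rfl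
  have hRcard := R.card_eq_of_card_eq_pow_mul hG' hp2x
  have hRindex := R.index_eq_of_card_eq_pow_mul hG' hp2x
  rw [pow_one] at hRcard
  refine IsSimpleGroup.card_sylow_ne_one R
    (fun h => hpp.ne_one (by rw [← hRcard, h, card_bot]))
    (fun h => by rw [h, index_top] at hRindex; omega) ?_
  exact eq_one_of_dvd_two_pow_of_modEq_one hp hfact (hRindex ▸ R.card_dvd_index)
    (card_sylow_modEq_one p G)

theorem isSolvable_of_card_dvd_two_pow_mul (hp : p = 3 ∨ p = 5) {k : ℕ} (G : Type u)
    [Group G] (hG : Nat.card G ∣ 2 ^ k * p) : Group.IsSolvable G := by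
  have hpp : p.Prime := by rcases hp with rfl | rfl <;> norm_num
  have : Fact p.Prime := ⟨hpp⟩
  refine isSolvable_of_isSimpleGroup_of_card_dvd (Nat.mul_ne_zero (by positivity) hpp.ne_zero)
    (fun H _ _ hH => ?_) G hG
  have : Finite H := Nat.finite_of_card_ne_zero
    (ne_zero_of_dvd_ne_zero (Nat.mul_ne_zero (by positivity) hpp.ne_zero) hH)
  obtain ⟨d, e, hd, he, hde⟩ := Nat.dvd_mul.mp hH
  obtain ⟨x, -, rfl⟩ := (Nat.dvd_prime_pow Nat.prime_two).mp hd
  rcases (Nat.dvd_prime hpp).mp he with rfl | rfl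
  · have : Fact (Nat.Prime 2) := ⟨Nat.prime_two⟩
    exact (IsPGroup.of_card (hde.symm.trans (mul_one _))).isSolvable
  · rcases eq_or_ne x 0 with rfl | hx
    · exact (IsPGroup.of_card (n := 1) (by rw [← hde]; ring)).isSolvable
    · exact absurd ‹IsSimpleGroup H› (not_isSimpleGroup_of_card_eq_two_pow_mul hp hx hde.symm)

end SmallOrder

section Main

variable {G : Type*} [Group G]

theorem exists_normal_isPGroup_of_le_center [Finite G] {p q a : ℕ} [Fact p.Prime] [Fact q.Prime]
    (hpq : p ≠ q) {K A : Subgroup G} [K.Normal] (hK : Nat.card K = q ^ a * p) (hAK : A ≤ K)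
    (hA : Nat.card A = p) (hAc : A ≤ center G) :
    ∃ T : Subgroup G, T.Normal ∧ IsPGroup q T ∧ Nat.card T = q ^ a := by
  have hp : p.Prime := Fact.out
  have hq : q.Prime := Fact.out
  have hA' : Nat.card (A.subgroupOf K) = p :=
    (Nat.card_congr (subgroupOfEquivOfLe hAK).toEquiv).trans hA
  have hpq' : ¬ p ∣ q ^ a := fun h => hpq (Nat.prime_eq_prime_of_dvd_pow hp hq h)
  let R : Sylow p K := (IsPGroup.of_card (n := 1) (hA'.trans (pow_one p).symm)).toSylow
    (by rwa [index_eq_of_card_eq (hK.trans (mul_comm _ _)) hA' hp.pos])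
  have hRc : (R : Subgroup K) ≤ center K := fun r hr =>
    mem_center_iff.mpr fun k => Subtype.ext (mem_center_iff.mp (hAc hr) k)
  obtain ⟨N, hN, hNR⟩ := R.exists_normal_isComplement'_of_le_center hRc
  have hRcard : Nat.card R = p := hA'
  have hNcard : Nat.card N = q ^ a :=
    Nat.eq_of_mul_eq_mul_right hp.pos (by rw [← hK, ← hRcard, hNR.card_mul_card])
  let S : Sylow q K := (IsPGroup.of_card hNcard).toSylow (by
    rw [hNR.symm.index_eq_card, hRcard]
    exact fun h => hpq ((Nat.prime_dvd_prime_iff_eq hq hp).mp h).symm)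
  exact ⟨_, S.normal_map_subtype hN, S.isPGroup'.map _,
    (card_map_of_injective K.subtype_injective).trans hNcard⟩

variable [Finite G] [Group.IsSolvable G] {p a : ℕ}

theorem exists_normal_isPGroup_two_ne_bot (hp : p.Prime) (hp2 : p ≠ 2) (ha : a ≠ 0)
    (hG : Nat.card G = 2 ^ a * p ^ 2) (hK : (commutator G).index = p) :
    ∃ T : Subgroup G, T.Normal ∧ IsPGroup 2 T ∧ T ≠ ⊥ := by
  by_contra! hO
  have : Fact p.Prime := ⟨hp⟩
  have hp2a : ¬ p ∣ 2 ^ a := fun h => hp2 (Nat.prime_eq_prime_of_dvd_pow hp Nat.prime_two h)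
  have hKcard : Nat.card (commutator G) = 2 ^ a * p :=
    card_eq_of_index_eq (by rw [hG]; ring) hK hp.pos
  have hKbot : commutator G ≠ ⊥ := fun h => by
    rw [h, card_bot] at hKcard
    exact hp.one_lt.ne' (Nat.eq_one_of_mul_eq_one_left hKcard.symm)
  obtain ⟨A, hAK, hAn, hAbot, hAcomm⟩ := Group.IsSolvable.exists_normal_isMulCommutative_le hKbot
  have hAcard : Nat.card A = p := by
    obtain ⟨S⟩ : Nonempty (Sylow 2 A) := inferInstance
    have hS : (S : Subgroup A) = ⊥ := (map_eq_bot_iff_of_injective _ A.subtype_injective).mp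
      (hO _ (S.normal_map_subtype inferInstance) (S.isPGroup'.map _))
    have hA2 : Nat.Coprime (Nat.card A) (2 ^ a) := Nat.Coprime.pow_right _
      ((Nat.Prime.coprime_iff_not_dvd Nat.prime_two).mpr fun h => by
        simpa [hS] using S.dvd_card_of_dvd_card h).symm
    have hAp : Nat.card A ∣ p := hA2.dvd_of_dvd_mul_left (hKcard ▸ card_dvd_of_le hAK)
    exact ((Nat.dvd_prime hp).mp hAp).resolve_left fun h => hAbot (card_eq_one.mp h)
  have hAc : A ≤ center G := by
    obtain ⟨Q, hAQ⟩ := (IsPGroup.of_card (n := 1) (hAcard.trans (pow_one p).symm)).exists_le_sylow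
    have hQcard := Q.card_eq_of_card_eq_pow_mul (hG.trans (mul_comm _ _)) hp2a
    have := IsPGroup.isMulCommutative_of_card_eq_prime_sq hQcard
    refine Group.IsSolvable.le_center (hK ▸ hp) hAQ fun hQK => hp2a ?_
    have h := hKcard ▸ hQcard ▸ card_dvd_of_le hQK
    rw [pow_two] at h
    exact Nat.dvd_of_mul_dvd_mul_right hp.pos h
  obtain ⟨T, hT, hT2, hTcard⟩ := exists_normal_isPGroup_of_le_center hp2 hKcard hAK hAcard hAc
  rw [hO T hT hT2, card_bot] at hTcard
  exact ha (Nat.pow_eq_one.mp hTcard.symm |>.resolve_left (by norm_num))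

theorem index_commutator_ne_of_card_eq_two_pow_mul_sq (hp : p.Prime) (hp2 : p ≠ 2)
    (hG : Nat.card G = 2 ^ a * p ^ 2) : (commutator G).index ≠ p := by
  induction a using Nat.strong_induction_on generalizing G with
  | _ a ih =>
  intro hK
  rcases eq_or_ne a 0 with rfl | ha
  · have : Fact p.Prime := ⟨hp⟩
    rw [pow_zero, one_mul] at hG
    have := IsPGroup.isMulCommutative_of_card_eq_prime_sq hG
    rw [commutator_eq_bot, index_bot, hG] at hK
    nlinarith [hp.two_le]
  obtain ⟨T, hT, hT2, hTbot⟩ := exists_normal_isPGroup_two_ne_bot hp hp2 ha hG hK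
  obtain ⟨t, hTcard⟩ := hT2.exists_card_eq
  have hpT : ¬ p ∣ Nat.card T := fun h =>
    hp2 (Nat.prime_eq_prime_of_dvd_pow hp Nat.prime_two (hTcard ▸ h))
  have hTtop : T ≠ ⊤ := fun h => hpT (by
    rw [h, card_top, hG]
    exact (dvd_pow_self p two_ne_zero).mul_left _)
  have hTK : T ≤ commutator G := Group.IsSolvable.le_commutator (hK ▸ hp) hTtop
  have hta : t ≤ a := by
    have hdvd : 2 ^ t ∣ 2 ^ a * p ^ 2 := hTcard ▸ hG ▸ card_subgroup_dvd_card T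
    have hcop : Nat.Coprime (2 ^ t) (p ^ 2) :=
      Nat.Coprime.pow _ _ ((Nat.coprime_primes Nat.prime_two hp).mpr hp2.symm)
    exact (Nat.pow_dvd_pow_iff_le_right Nat.one_lt_two).mp (hcop.dvd_of_dvd_mul_right hdvd)
  have hGT : Nat.card (G ⧸ T) = 2 ^ (a - t) * p ^ 2 :=
    index_eq_of_card_eq (by rw [hG, ← Nat.pow_sub_mul_pow 2 hta]; ring) hTcard (by positivity)
  have hta' : a - t < a := Nat.sub_lt (Nat.pos_of_ne_zero ha)
    (Nat.pos_of_ne_zero fun h => hTbot (by rw [← card_eq_one, hTcard, h, pow_zero]))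
  exact ih (a - t) hta' hGT (index_commutator_quotient hTK ▸ hK)

end Main

theorem card_abelianization_ne_of_card_eq_two_pow_mul_sq {p a : ℕ} (hp : p = 3 ∨ p = 5)
    (G : Type u) [Group G] (hG : Nat.card G = 2 ^ a * p ^ 2) :
    Nat.card (Abelianization G) ≠ p := by
  have hpp : p.Prime := by rcases hp with rfl | rfl <;> norm_num
  have : Finite G :=
    Nat.finite_of_card_ne_zero (hG ▸ Nat.mul_ne_zero (by positivity) (pow_ne_zero 2 hpp.ne_zero))
  intro hK
  have hKcard : Nat.card (commutator G) = 2 ^ a * p :=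
    card_eq_of_index_eq (by rw [hG]; ring) hK hpp.pos
  have := isSolvable_of_card_dvd_two_pow_mul hp (commutator G) hKcard.dvd
  have : Group.IsSolvable G := (Group.isSolvable_iff_subgroup_quotient (commutator G)).mpr
    ⟨inferInstance, inferInstanceAs (Group.IsSolvable (Abelianization G))⟩
  exact index_commutator_ne_of_card_eq_two_pow_mul_sq hpp (by rintro rfl; omega) hG hK

theorem stmt_17 :
    (∀ (G : Type) [Group G], Nat.card G = 1152 →
      IsEmpty (Abelianization G ≃* Multiplicative (ZMod 3))) ∧
    (∀ (G : Type) [Group G], Nat.card G = 800 →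
      IsEmpty (Abelianization G ≃* Multiplicative (ZMod 5))) := by
  refine ⟨fun G _ hG => ⟨fun e => ?_⟩, fun G _ hG => ⟨fun e => ?_⟩⟩
  · exact card_abelianization_ne_of_card_eq_two_pow_mul_sq (a := 7) (Or.inl rfl) G hG
      (by simpa using Nat.card_congr e.toEquiv)
  · exact card_abelianization_ne_of_card_eq_two_pow_mul_sq (a := 5) (Or.inr rfl) G hG
      (by simpa using Nat.card_congr e.toEquiv)
end

section
/- Let H be a finite group whose abelianization is cyclic of order 3, and suppose H has a disjoint pair of spherical systems of generators (T₁, T₂), where Tᵢ = (h_{i1}, h_{i2}, h_{i3}) with ord(h_{i1}) = 2, ord(h_{i2}) = 3, ord(h_{i3}) = 9 for i = 1, 2. Then: (i) for each i = 1, 2, the three elements h_{i1}, h_{i2}h_{i1}h_{i2}⁻¹, h_{i2}²h_{i1}h_{i2}⁻² each have order 2 and together generate the commutator subgroup H' of H, and the element z_i := h_{i1}·(h_{i2}h_{i1}h_{i2}⁻¹)·(h_{i2}²h_{i1}h_{i2}⁻²) has order 3; (ii) the sets Σ̃₁ and Σ̃₂ are disjoint, where Σ̃ᵢ := ⋃_{h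 ∈ H'} h·{h_{i1}, z_i, z_i²}·h⁻¹. -/
/-- A spherical system of generators of a group `G`: a tuple generating `G`
whose product equals `1`. -/
def SphericalSystem {H : Type*} [Group H] {r : ℕ} (T : Fin r → H) : Prop :=
  Subgroup.closure (Set.range T) = ⊤ ∧ (List.ofFn T).prod = 1

/-- `Σ(T)`: the union of all conjugates of the cyclic subgroups generated
by the entries of `T`. -/
def SigmaSet {H : Type*} [Group H] {r : ℕ} (T : Fin r → H) : Set H :=
  ⋃ (g : H) (i : Fin r) (j : ℕ), {g * T i ^ j * g⁻¹}

/-- The triple `(h₁, h₂h₁h₂⁻¹, h₂²h₁h₂⁻²)` attached to a triple `T = (h₁,h₂,h₃)`. -/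
def conjTriple {H : Type*} [Group H] (T : Fin 3 → H) : Fin 3 → H :=
  ![T 0, T 1 * T 0 * (T 1)⁻¹, (T 1) ^ 2 * T 0 * ((T 1) ^ 2)⁻¹]

/-- The element `z = h₁ · h₂h₁h₂⁻¹ · h₂²h₁h₂⁻²`. -/
def zElt {H : Type*} [Group H] (T : Fin 3 → H) : H :=
  T 0 * (T 1 * T 0 * (T 1)⁻¹) * ((T 1) ^ 2 * T 0 * ((T 1) ^ 2)⁻¹)

/-- `Σ̃` : the union over `h` in the commutator subgroup of the conjugates
`h·{h₁, z, z²}·h⁻¹`. -/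
def tildeSigma {H : Type*} [Group H] (T : Fin 3 → H) : Set H :=
  ⋃ h ∈ (commutator H : Set H),
    {h * T 0 * h⁻¹, h * zElt T * h⁻¹, h * (zElt T) ^ 2 * h⁻¹}

/-!
Write `T = (a, b, c)`, so that `a * b * c = 1` and `b ^ 3 = 1`. Since `orderOf a = 2` is prime to
`|H / H'| = 3`, `a ∈ H'`. Conjugation by `b` cyclically permutes `a, bab⁻¹, b²ab⁻²`, so the
subgroup `K` they generate is normalized by `a` and `b`, hence normal; since `H = K ⊔ ⟨b⟩` with
`⟨b⟩` abelian, `H' ≤ K ≤ H'`. Expanding, `z * b ^ 3 = (a * b) ^ 3 = c⁻³`, so `z = c ^ 6` has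
order `3`. Every element of `Σ̃(T)` is then a nontrivial conjugate of a power of `a` or `c`, so
`Σ̃(T) ⊆ Σ(T) \ {1}`, and disjointness of `Σ(T₁)`, `Σ(T₂)` gives that of `Σ̃(T₁)`, `Σ̃(T₂)`.
-/

open Subgroup

section

variable {G : Type*} [Group G]

theorem SphericalSystem.prod_eq_one {T : Fin 3 → G} (hT : SphericalSystem T) :
    T 0 * T 1 * T 2 = 1 := by
  simpa [List.ofFn_succ, mul_assoc] using hT.2

theorem mem_commutator_of_coprime_card_abelianization {g : G}
    (hg : (orderOf g).Coprime (Nat.card (Abelianization G))) : g ∈ commutator G := by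
  rw [← Abelianization.ker_of, MonoidHom.mem_ker, ← orderOf_eq_one_iff]
  exact Nat.Coprime.eq_one_of_dvd (Nat.Coprime.coprime_dvd_left (orderOf_map_dvd _ g) hg)
    (orderOf_dvd_natCard _)

theorem closure_range_le_of_prod_eq_one {T : Fin 3 → G} (hprod : T 0 * T 1 * T 2 = 1)
    {K : Subgroup G} (h0 : T 0 ∈ K) (h1 : T 1 ∈ K) : closure (Set.range T) ≤ K := by
  rw [closure_le]
  rintro _ ⟨i, rfl⟩
  fin_cases i
  · exact h0
  · exact h1
  · simpa [eq_inv_of_mul_eq_one_right hprod] using inv_mem (mul_mem h0 h1)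

theorem conjTriple_apply (T : Fin 3 → G) (i : Fin 3) :
    conjTriple T i = T 1 ^ (i : ℕ) * T 0 * (T 1 ^ (i : ℕ))⁻¹ := by
  fin_cases i <;> simp [conjTriple]

theorem orderOf_conjTriple (T : Fin 3 → G) (i : Fin 3) :
    orderOf (conjTriple T i) = orderOf (T 0) := by
  rw [conjTriple_apply, ← MulAut.conj_apply, MulEquiv.orderOf_eq]

theorem conj_conjTriple {T : Fin 3 → G} (hb : T 1 ^ 3 = 1) (i : Fin 3) :
    T 1 * conjTriple T i * (T 1)⁻¹ = conjTriple T (finRotate 3 i) := by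
  fin_cases i
  · rfl
  · simp [conjTriple, pow_two, mul_assoc]
  · calc T 1 * (T 1 ^ 2 * T 0 * (T 1 ^ 2)⁻¹) * (T 1)⁻¹
        = T 1 ^ 3 * T 0 * (T 1 ^ 3)⁻¹ := by group
      _ = T 0 := by simp [hb]

theorem mem_normalizer_range_conjTriple {T : Fin 3 → G} (hb : T 1 ^ 3 = 1) :
    T 1 ∈ normalizer (Set.range (conjTriple T)) := by
  rw [mem_normalizer_iff_conj_image_eq, ← Set.range_comp]
  have : ⇑(MulAut.conj (T 1)) ∘ conjTriple T = conjTriple T ∘ finRotate 3 :=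
    funext (conj_conjTriple hb)
  rw [this, (finRotate 3).surjective.range_comp]

theorem closure_conjTriple_normal {T : Fin 3 → G} (hT : SphericalSystem T) (hb : T 1 ^ 3 = 1) :
    (closure (Set.range (conjTriple T))).Normal := by
  rw [← normalizer_eq_top_iff, eq_top_iff, ← hT.1]
  refine closure_range_le_of_prod_eq_one hT.prod_eq_one ?_ ?_
  · exact le_normalizer (subset_closure ⟨0, rfl⟩)
  · exact normalizer_le_normalizer_closure _ (mem_normalizer_range_conjTriple hb)

theorem closure_conjTriple_eq_commutator {T : Fin 3 → G} (hT : SphericalSystem T)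
    (hb : T 1 ^ 3 = 1) (ha : T 0 ∈ commutator G) :
    closure (Set.range (conjTriple T)) = commutator G := by
  have hK := closure_conjTriple_normal hT hb
  refine le_antisymm ?_
    (hK.commutator_le_of_self_sup_commutative_eq_top (H := zpowers (T 1)) ?_ inferInstance)
  · rw [closure_le]
    rintro _ ⟨i, rfl⟩
    rw [conjTriple_apply]
    exact Normal.conj_mem inferInstance _ ha _
  · rw [eq_top_iff, ← hT.1]
    exact closure_range_le_of_prod_eq_one hT.prod_eq_one
      (mem_sup_left (subset_closure ⟨0, rfl⟩)) (mem_sup_right (mem_zpowers _))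

theorem zElt_mul_pow_three (T : Fin 3 → G) : zElt T * T 1 ^ 3 = (T 0 * T 1) ^ 3 := by
  simp only [zElt, pow_succ, pow_zero, one_mul]
  group

theorem zElt_eq_pow_six {T : Fin 3 → G} (hprod : T 0 * T 1 * T 2 = 1) (hb : T 1 ^ 3 = 1)
    (hc : T 2 ^ 9 = 1) : zElt T = T 2 ^ 6 := by
  have := zElt_mul_pow_three T
  rw [hb, mul_one, eq_inv_of_mul_eq_one_left hprod, inv_pow] at this
  rw [this, inv_eq_iff_mul_eq_one, ← pow_add, hc]

theorem orderOf_zElt {T : Fin 3 → G} (hprod : T 0 * T 1 * T 2 = 1) (hb : T 1 ^ 3 = 1)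
    (hc : orderOf (T 2) = 9) : orderOf (zElt T) = 3 := by
  rw [zElt_eq_pow_six hprod hb (orderOf_dvd_iff_pow_eq_one.mp (dvd_of_eq hc)),
    orderOf_pow' _ (by norm_num), hc]
  rfl

theorem tildeSigma_subset_sigmaSet {T : Fin 3 → G} (hz : zElt T = T 2 ^ 6) :
    tildeSigma T ⊆ SigmaSet T := by
  simp only [tildeSigma, Set.iUnion_subset_iff, Set.insert_subset_iff,
    Set.singleton_subset_iff, SigmaSet, Set.mem_iUnion, Set.mem_singleton_iff]
  intro h _
  refine ⟨⟨h, 0, 1, by rw [pow_one]⟩, ⟨h, 2, 6, by rw [hz]⟩, ⟨h, 2, 12, by rw [hz, ← pow_mul]⟩⟩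

theorem one_notMem_tildeSigma {T : Fin 3 → G} (ha : T 0 ≠ 1) (hz : orderOf (zElt T) = 3) :
    1 ∉ tildeSigma T := by
  have hz1 : zElt T ≠ 1 := fun h => by simp [h] at hz
  have hz2 : zElt T ^ 2 ≠ 1 := pow_ne_one_of_lt_orderOf two_ne_zero (by omega)
  simp only [tildeSigma, Set.mem_iUnion, Set.mem_insert_iff, Set.mem_singleton_iff,
    eq_comm (a := (1 : G)), conj_eq_one_iff]
  tauto

end

theorem stmt_18_general (H : Type*) [Group H]
    (habo : Nat.card (Abelianization H) = 3)
    (T₁ T₂ : Fin 3 → H)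
    (hs₁ : SphericalSystem T₁) (hs₂ : SphericalSystem T₂)
    (ho₁ : orderOf (T₁ 0) = 2 ∧ orderOf (T₁ 1) = 3 ∧ orderOf (T₁ 2) = 9)
    (ho₂ : orderOf (T₂ 0) = 2 ∧ orderOf (T₂ 1) = 3 ∧ orderOf (T₂ 2) = 9)
    (hdisj : SigmaSet T₁ ∩ SigmaSet T₂ = {1}) :
    (∀ T ∈ ({T₁, T₂} : Set (Fin 3 → H)),
      (∀ i, orderOf (conjTriple T i) = 2) ∧
      Subgroup.closure (Set.range (conjTriple T)) = commutator H ∧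
      orderOf (zElt T) = 3) ∧
    tildeSigma T₁ ∩ tildeSigma T₂ = ∅ := by
  have key : ∀ T : Fin 3 → H, SphericalSystem T →
      orderOf (T 0) = 2 ∧ orderOf (T 1) = 3 ∧ orderOf (T 2) = 9 →
      ((∀ i, orderOf (conjTriple T i) = 2) ∧ closure (Set.range (conjTriple T)) = commutator H ∧
        orderOf (zElt T) = 3) ∧ tildeSigma T ⊆ SigmaSet T := by
    rintro T hT ⟨ha, hb, hc⟩
    have hb3 : T 1 ^ 3 = 1 := orderOf_dvd_iff_pow_eq_one.mp (dvd_of_eq hb)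
    have ha' : T 0 ∈ commutator H :=
      mem_commutator_of_coprime_card_abelianization (by rw [ha, habo]; norm_num)
    have hz : zElt T = T 2 ^ 6 :=
      zElt_eq_pow_six hT.prod_eq_one hb3 (orderOf_dvd_iff_pow_eq_one.mp (dvd_of_eq hc))
    exact ⟨⟨fun i => (orderOf_conjTriple T i).trans ha,
      closure_conjTriple_eq_commutator hT hb3 ha', orderOf_zElt hT.prod_eq_one hb3 hc⟩,
      tildeSigma_subset_sigmaSet hz⟩
  obtain ⟨part₁, sub₁⟩ := key T₁ hs₁ ho₁
  obtain ⟨part₂, sub₂⟩ := key T₂ hs₂ ho₂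
  refine ⟨by rintro T (rfl | rfl); exacts [part₁, part₂], ?_⟩
  refine Set.eq_empty_of_forall_notMem fun x ⟨hx₁, hx₂⟩ => ?_
  obtain rfl : x = 1 := by simpa [hdisj] using Set.mem_inter (sub₁ hx₁) (sub₂ hx₂)
  exact one_notMem_tildeSigma (fun h => by simp [h] at ho₁) part₁.2.2 hx₁

theorem stmt_18 (H : Type*) [Group H] [Finite H]
    (habc : IsCyclic (Abelianization H)) (habo : Nat.card (Abelianization H) = 3)
    (T₁ T₂ : Fin 3 → H)
    (hs₁ : SphericalSystem T₁) (hs₂ : SphericalSystem T₂)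
    (ho₁ : orderOf (T₁ 0) = 2 ∧ orderOf (T₁ 1) = 3 ∧ orderOf (T₁ 2) = 9)
    (ho₂ : orderOf (T₂ 0) = 2 ∧ orderOf (T₂ 1) = 3 ∧ orderOf (T₂ 2) = 9)
    (hdisj : SigmaSet T₁ ∩ SigmaSet T₂ = {1}) :
    (∀ T ∈ ({T₁, T₂} : Set (Fin 3 → H)),
      (∀ i, orderOf (conjTriple T i) = 2) ∧
      Subgroup.closure (Set.range (conjTriple T)) = commutator H ∧
      orderOf (zElt T) = 3) ∧
    tildeSigma T₁ ∩ tildeSigma T₂ = ∅ :=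
  stmt_18_general H habo T₁ T₂ hs₁ hs₂ ho₁ ho₂ hdisj
end
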